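/- arXiv:1701.06637 — 2 statements merged into one kernel-verified Lean document; each statement's English description precedes it below -/
import Mathlib

section
/- Fix a real s > 1. For N ≥ 1, let x_k = k/N for k = 0, 1, ..., N-1 be equally spaced points on the circle ℝ/ℤ (with the arc-length metric d(x,y) = min_{m ∈ ℤ} |x - y - m|), and let y_N = 1/(2N). Then lim_{N→∞} N^{-s} · ∑_{k=0}^{N-1} d(y_N, x_k)^{-s} = 2(2^s - 1)·ζ(s). -/
open Filter

/-!
Since `y_N - x_k = (1 - 2k)/(2N)`, reducing modulo `1` shows that the distances `d(y_N, x_k)`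
are the numbers `(2j + 1)/(2N)`: for `j < ⌊N/2⌋` from the points `x_{j+1}` to the right of `y_N`,
and for `j < ⌈N/2⌉` from the points `x_{N-j}` to its left. Hence
`N^{-s} ∑_k d(y_N, x_k)^{-s} = 2^s (S_{⌊N/2⌋} + S_{⌈N/2⌉})`, where `S_n` are the partial sums of
`∑_j (2j + 1)^{-s} = (1 - 2^{-s}) ζ(s)`.
-/

theorem Finset.sum_range_eq_sum_range_div_two_add {M : Type*} [AddCommMonoid M] {N : ℕ}
    {f g : ℕ → M} (h0 : f 0 = g 0) (hlow : ∀ j < N / 2, f (j + 1) = g j)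
    (hhigh : ∀ i, 0 < i → i < N - N / 2 → f (N - i) = g i) :
    ∑ k ∈ range N, f k = ∑ j ∈ range (N / 2), g j + ∑ i ∈ range (N - N / 2), g i := by
  rcases Nat.eq_zero_or_pos N with rfl | hN
  · simp
  have hlen : N - N / 2 = N - (N / 2 + 1) + 1 := by omega
  have hhigh' : ∑ k ∈ Ico (N / 2 + 1) N, f k = ∑ i ∈ range (N - (N / 2 + 1)), g (i + 1) := by
    refine sum_nbij' (fun k => N - k - 1) (fun i => N - i - 1) ?_ ?_ ?_ ?_ ?_ <;>
      intro k hk <;> simp only [mem_Ico, mem_range] at hk ⊢ <;> try omega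
    rw [← hhigh (N - k - 1 + 1) (by omega) (by omega)]
    congr 1
    omega
  rw [← sum_range_add_sum_Ico f (by omega : N / 2 + 1 ≤ N), sum_range_succ', hhigh', hlen,
    sum_range_succ' g, sum_congr rfl fun j hj => hlow j (mem_range.mp hj), h0, add_assoc,
    add_comm (g 0)]

theorem AddCircle.norm_coe_odd_div {N j : ℕ} (hj : 2 * j + 1 ≤ N) :
    ‖(((2 * j + 1) / (2 * N) : ℝ) : AddCircle (1 : ℝ))‖ = (2 * j + 1) / (2 * N) := by
  have hN : (0 : ℝ) < N := by exact_mod_cast (show 0 < N by omega)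
  have hj' : (2 * j + 1 : ℝ) ≤ N := by exact_mod_cast hj
  have hx : (0 : ℝ) ≤ (2 * j + 1) / (2 * N) := by positivity
  nth_rw 2 [← abs_of_nonneg hx]
  rw [AddCircle.norm_coe_eq_abs_iff (p := 1) one_ne_zero, abs_of_nonneg hx, abs_one,
    div_le_div_iff₀ (by positivity) two_pos]
  linarith

theorem sum_norm_midpoint_sub_node_rpow_neg (s : ℝ) (N : ℕ) :
    ∑ k ∈ Finset.range N, ‖((1 / (2 * (N : ℝ)) : ℝ) : AddCircle (1 : ℝ)) -
        (((k : ℝ) / (N : ℝ) : ℝ) : AddCircle (1 : ℝ))‖ ^ (-s)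
      = ∑ j ∈ Finset.range (N / 2), ((2 * j + 1) / (2 * N) : ℝ) ^ (-s)
        + ∑ j ∈ Finset.range (N - N / 2), ((2 * j + 1) / (2 * N) : ℝ) ^ (-s) := by
  rcases Nat.eq_zero_or_pos N with rfl | hN
  · simp
  have hN' : (N : ℝ) ≠ 0 := by positivity
  refine Finset.sum_range_eq_sum_range_div_two_add ?_ (fun j hj => ?_) (fun i _ hi => ?_) <;>
    rw [← AddCircle.coe_sub]
  · have hy : 1 / (2 * (N : ℝ)) - ((0 : ℕ) : ℝ) / N = (2 * ((0 : ℕ) : ℝ) + 1) / (2 * N) := by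
      simp
    rw [hy, AddCircle.norm_coe_odd_div (by omega)]
  · have hy : 1 / (2 * (N : ℝ)) - ((j + 1 : ℕ) : ℝ) / N = -((2 * j + 1) / (2 * N)) := by
      push_cast
      field_simp
      ring
    rw [hy, AddCircle.coe_neg, norm_neg, AddCircle.norm_coe_odd_div (by omega)]
  · have hy : 1 / (2 * (N : ℝ)) - ((N - i : ℕ) : ℝ) / N + 1 = (2 * i + 1) / (2 * N) := by
      rw [Nat.cast_sub (by omega)]
      field_simp
      ring
    rw [← AddCircle.coe_add_period, hy, AddCircle.norm_coe_odd_div (by omega)]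

theorem rpow_neg_mul_sum_norm_midpoint_sub_node_rpow_neg (s : ℝ) {N : ℕ} (hN : 0 < N) :
    (N : ℝ) ^ (-s) * ∑ k ∈ Finset.range N, ‖((1 / (2 * (N : ℝ)) : ℝ) : AddCircle (1 : ℝ)) -
        (((k : ℝ) / (N : ℝ) : ℝ) : AddCircle (1 : ℝ))‖ ^ (-s)
      = 2 ^ s * (∑ j ∈ Finset.range (N / 2), (2 * j + 1 : ℝ) ^ (-s)
        + ∑ j ∈ Finset.range (N - N / 2), (2 * j + 1 : ℝ) ^ (-s)) := by
  have hscale (j : ℕ) :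
      (N : ℝ) ^ (-s) * ((2 * j + 1) / (2 * N) : ℝ) ^ (-s) = 2 ^ s * (2 * j + 1 : ℝ) ^ (-s) := by
    have hN' : (N : ℝ) ≠ 0 := by positivity
    rw [← Real.mul_rpow (by positivity) (by positivity),
      show (N : ℝ) * ((2 * j + 1) / (2 * N)) = (2 * j + 1) * 2⁻¹ by field_simp,
      Real.mul_rpow (by positivity) (by positivity), Real.inv_rpow zero_le_two,
      Real.rpow_neg zero_le_two, inv_inv, mul_comm]
  simp only [sum_norm_midpoint_sub_node_rpow_neg, mul_add, Finset.mul_sum, hscale]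

theorem hasSum_odd_rpow_neg {s : ℝ} (hs : 1 < s) :
    HasSum (fun j : ℕ => (2 * j + 1 : ℝ) ^ (-s)) ((1 - 2 ^ (-s)) * ∑' n : ℕ, (n : ℝ) ^ (-s)) := by
  have hζ : Summable (fun n : ℕ => (n : ℝ) ^ (-s)) := Real.summable_nat_rpow.mpr (by linarith)
  have heven :
      HasSum (fun k : ℕ => ((2 * k : ℕ) : ℝ) ^ (-s)) (2 ^ (-s) * ∑' n : ℕ, (n : ℝ) ^ (-s)) := by
    refine (hζ.hasSum.mul_left _).congr_fun fun k => ?_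
    rw [Nat.cast_mul, Nat.cast_two, Real.mul_rpow zero_le_two k.cast_nonneg]
  have hodd : Summable (fun k : ℕ => ((2 * k + 1 : ℕ) : ℝ) ^ (-s)) :=
    hζ.comp_injective fun a b hab => by simpa using hab
  have hsplit := (HasSum.even_add_odd (f := fun n : ℕ => (n : ℝ) ^ (-s)) heven
    hodd.hasSum).unique hζ.hasSum
  rw [show (1 - 2 ^ (-s)) * ∑' n : ℕ, (n : ℝ) ^ (-s) = ∑' k : ℕ, ((2 * k + 1 : ℕ) : ℝ) ^ (-s) by
    linarith]
  exact hodd.hasSum.congr_fun fun k => by push_cast; rfl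

theorem ofReal_tsum_rpow_neg_eq_riemannZeta {s : ℝ} (hs : 1 < s) :
    ((∑' n : ℕ, (n : ℝ) ^ (-s) : ℝ) : ℂ) = riemannZeta s := by
  rw [zeta_eq_tsum_one_div_nat_cpow (by simpa using hs), Complex.ofReal_tsum]
  congr 1 with n
  rw [Complex.ofReal_cpow n.cast_nonneg]
  push_cast
  rw [Complex.cpow_neg, one_div]

/-- For `s > 1`, with `N` equally spaced points `x_k = k/N` on the circle `ℝ/ℤ`
(arc-length metric) and `y_N = 1/(2N)`,
`N^{-s} ∑_{k<N} d(y_N, x_k)^{-s} → 2(2^s - 1)ζ(s)` as `N → ∞`. -/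
theorem polarization_circle_limit (s : ℝ) (hs : 1 < s) :
    Tendsto (fun N : ℕ =>
        (((N : ℝ) ^ (-s) *
          ∑ k ∈ Finset.range N,
            ‖((1 / (2 * (N : ℝ)) : ℝ) : AddCircle (1 : ℝ)) -
              (((k : ℝ) / (N : ℝ) : ℝ) : AddCircle (1 : ℝ))‖ ^ (-s) : ℝ) : ℂ))
      atTop (nhds (((2 * ((2 : ℝ) ^ s - 1) : ℝ) : ℂ) * riemannZeta (s : ℂ))) := by
  rw [← ofReal_tsum_rpow_neg_eq_riemannZeta hs, ← Complex.ofReal_mul, tendsto_ofReal_iff]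
  have hodd := (hasSum_odd_rpow_neg hs).tendsto_sum_nat
  have hhalf : Tendsto (· / 2) atTop atTop := Nat.tendsto_div_const_atTop two_ne_zero
  have hhalf' : Tendsto (fun N => N - N / 2) atTop atTop :=
    tendsto_atTop_mono (fun N => by omega) hhalf
  have hlim := ((hodd.comp hhalf).add (hodd.comp hhalf')).const_mul ((2 : ℝ) ^ s)
  have hvalue : (2 : ℝ) ^ s * ((1 - 2 ^ (-s)) * ∑' n : ℕ, (n : ℝ) ^ (-s)
      + (1 - 2 ^ (-s)) * ∑' n : ℕ, (n : ℝ) ^ (-s))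
      = 2 * (2 ^ s - 1) * ∑' n : ℕ, (n : ℝ) ^ (-s) := by
    rw [Real.rpow_neg zero_le_two]
    field_simp
    ring
  rw [← hvalue]
  refine hlim.congr' ?_
  filter_upwards [eventually_gt_atTop 0] with N hN
  exact (rpow_neg_mul_sum_norm_midpoint_sub_node_rpow_neg s hN).symm
end

section
/- Let s > 1 and N ≥ 2. On the circle ℝ/ℤ with the arc-length metric d, let x_k = k/N for k = 0, ..., N-1. Then for every y ∈ ℝ/ℤ, ∑_{k=0}^{N-1} d(y, x_k)^{-s} ≥ 2 N^s ∑_{n=0}^{⌊N/2⌋ - 1} (n + 1/2)^{-s} (with the convention that a summand is +∞ if y = x_k). -/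
open scoped ENNReal

private lemma pair_rpow_ineq {s a b : ℝ} (hs : 0 < s) (ha : 0 < a) (hb : 0 < b) :
    2 * ((a + b) / 2) ^ (-s) ≤ a ^ (-s) + b ^ (-s) := by
  have hx : (0:ℝ) ≤ a ^ (-s) := Real.rpow_nonneg ha.le _
  have hy : (0:ℝ) ≤ b ^ (-s) := Real.rpow_nonneg hb.le _
  have hab : 0 < a * b := mul_pos ha hb
  have hm : 0 < (a + b) / 2 := by linarith
  have h1 : 2 * Real.sqrt (a ^ (-s) * b ^ (-s)) ≤ a ^ (-s) + b ^ (-s) := by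
    nlinarith [sq_nonneg (Real.sqrt (a ^ (-s)) - Real.sqrt (b ^ (-s))),
      Real.sq_sqrt hx, Real.sq_sqrt hy, Real.sqrt_mul_self hx,
      Real.sqrt_mul hx (b ^ (-s))]
  have h2 : a ^ (-s) * b ^ (-s) = (a * b) ^ (-s) := (Real.mul_rpow ha.le hb.le).symm
  have h3 : Real.sqrt ((a * b) ^ (-s)) = (a * b) ^ (-s / 2) := by
    rw [Real.sqrt_eq_rpow, ← Real.rpow_mul hab.le]; ring_nf
  have h5 : a * b ≤ ((a + b) / 2) ^ 2 := by nlinarith [sq_nonneg (a - b)]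
  have h6 : (((a + b) / 2) ^ 2) ^ (-s / 2) ≤ (a * b) ^ (-s / 2) :=
    Real.rpow_le_rpow_of_nonpos hab h5 (by linarith)
  have h7 : (((a + b) / 2) ^ 2) ^ (-s / 2) = ((a + b) / 2) ^ (-s) := by
    rw [← Real.rpow_two, ← Real.rpow_mul hm.le]; ring_nf
  calc 2 * ((a + b) / 2) ^ (-s) = 2 * (((a + b) / 2) ^ 2) ^ (-s / 2) := by rw [h7]
    _ ≤ 2 * (a * b) ^ (-s / 2) := by linarith
    _ = 2 * Real.sqrt (a ^ (-s) * b ^ (-s)) := by rw [h2, h3]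
    _ ≤ a ^ (-s) + b ^ (-s) := h1

private lemma addCircle_norm_coe_le (x : ℝ) : ‖(x : AddCircle (1:ℝ))‖ ≤ |x| := by
  rw [AddCircle.norm_eq]
  simpa using round_le x 0

private lemma addCircle_coe_eq (x z : ℝ) (m : ℤ) (h : x - z = m) :
    (x : AddCircle (1:ℝ)) = (z : AddCircle (1:ℝ)) := by
  rw [QuotientAddGroup.eq_iff_sub_mem]
  refine AddSubgroup.mem_zmultiples_iff.2 ⟨m, ?_⟩
  rw [zsmul_eq_mul, mul_one, h]

/-- For `s > 1`, `N ≥ 2`, equally spaced points `x_k = k/N` on the circle `ℝ/ℤ`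
with the arc-length metric, and any `y` on the circle,
`∑_{k<N} d(y, x_k)^{-s} ≥ 2 N^s ∑_{n < ⌊N/2⌋} (n + 1/2)^{-s}`,
with the convention that a summand is `+∞` when `y = x_k`. -/
theorem circle_polarization_lower_bound (s : ℝ) (hs : 1 < s) (N : ℕ) (hN : 2 ≤ N)
    (y : AddCircle (1 : ℝ)) :
    ENNReal.ofReal (2 * (N : ℝ) ^ s *
        ∑ n ∈ Finset.range (N / 2), ((n : ℝ) + 1 / 2) ^ (-s)) ≤
      ∑ k ∈ Finset.range N,
        (ENNReal.ofReal ‖y - (((k : ℝ) / (N : ℝ) : ℝ) : AddCircle (1 : ℝ))‖) ^ (-s) := by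
  obtain ⟨Y, rfl⟩ := QuotientAddGroup.mk_surjective y
  have hs0 : (0:ℝ) < s := by linarith
  have hNR : (0:ℝ) < (N:ℝ) := by positivity
  have hNZ : (0:ℤ) < (N:ℤ) := by exact_mod_cast (by omega : 0 < N)
  set K : ℤ := ⌊(N:ℝ) * Y⌋ with hK
  set u : ℝ := Int.fract ((N:ℝ) * Y) with hudef
  have hu0 : 0 ≤ u := Int.fract_nonneg _
  have hu1 : u < 1 := Int.fract_lt_one _
  have hKu : (N:ℝ) * Y = K + u := by rw [hudef, hK, Int.fract]; ring
  set f : ℕ → ℝ≥0∞ := fun k =>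
    (ENNReal.ofReal ‖(Y : AddCircle (1:ℝ)) - (((k : ℝ) / (N : ℝ) : ℝ) : AddCircle (1:ℝ))‖) ^ (-s)
    with hf
  set pa : ℕ → ℕ := fun n => ((K - n) % (N:ℤ)).toNat with hpa
  set pb : ℕ → ℕ := fun n => ((K + n + 1) % (N:ℤ)).toNat with hpb
  -- general distance bound
  have key : ∀ (t : ℤ) (r : ℝ), (N:ℝ) * Y = t + r →
      ‖(Y : AddCircle (1:ℝ)) - ((((((t % (N:ℤ)).toNat : ℕ) : ℝ)) / (N:ℝ) : ℝ) : AddCircle (1:ℝ))‖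
        ≤ |r| / N := by
    intro t r htr
    set j : ℕ := (t % (N:ℤ)).toNat with hj
    have hjz : (j:ℤ) = t % (N:ℤ) := Int.toNat_of_nonneg (Int.emod_nonneg t hNZ.ne')
    obtain ⟨q, hq⟩ : ∃ q : ℤ, t - (j:ℤ) = (N:ℤ) * q := ⟨t / (N:ℤ), by rw [hjz]; linarith [Int.emod_add_mul_ediv t (N:ℤ)]⟩
    have hqR : (t:ℝ) - (j:ℝ) = (N:ℝ) * (q:ℝ) := by exact_mod_cast hq
    have hsub : ((Y : AddCircle (1:ℝ)) - (((j:ℝ)/(N:ℝ) : ℝ) : AddCircle (1:ℝ)))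
        = ((Y - (j:ℝ)/(N:ℝ) : ℝ) : AddCircle (1:ℝ)) := (QuotientAddGroup.mk_sub _ _ _).symm
    have hco : ((Y - (j:ℝ)/(N:ℝ) : ℝ) : AddCircle (1:ℝ)) = ((r/(N:ℝ) : ℝ) : AddCircle (1:ℝ)) := by
      refine addCircle_coe_eq _ _ q ?_
      field_simp
      linarith [htr, hqR]
    rw [hsub, hco]
    calc ‖((r/(N:ℝ) : ℝ) : AddCircle (1:ℝ))‖ ≤ |r/(N:ℝ)| := addCircle_norm_coe_le _
      _ = |r| / N := by rw [abs_div, abs_of_pos hNR]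
  have hfa : ∀ n : ℕ, ‖(Y : AddCircle (1:ℝ)) - ((((pa n : ℝ)) / (N:ℝ) : ℝ) : AddCircle (1:ℝ))‖
      ≤ ((n:ℝ) + u) / N := by
    intro n
    have h := key (K - n) (u + n) (by push_cast; linarith)
    have habs : |u + (n:ℝ)| = (n:ℝ) + u := by
      rw [abs_of_nonneg (by positivity)]; ring
    rw [habs] at h
    simpa [hpa] using h
  have hfb : ∀ n : ℕ, ‖(Y : AddCircle (1:ℝ)) - ((((pb n : ℝ)) / (N:ℝ) : ℝ) : AddCircle (1:ℝ))‖
      ≤ ((n:ℝ) + 1 - u) / N := by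
    intro n
    have h := key (K + n + 1) (u - n - 1) (by push_cast; linarith)
    have habs : |u - (n:ℝ) - 1| = (n:ℝ) + 1 - u := by
      rw [abs_of_nonpos (by linarith [Nat.cast_nonneg (α := ℝ) n])]; ring
    rw [habs] at h
    simpa [hpb] using h
  have fmono : ∀ (k : ℕ) (d : ℝ),
      ‖(Y : AddCircle (1:ℝ)) - (((k:ℝ)/(N:ℝ) : ℝ) : AddCircle (1:ℝ))‖ ≤ d →
      (ENNReal.ofReal d) ^ (-s) ≤ f k := by
    intro k d h
    rw [hf]
    simp only
    rw [ENNReal.rpow_neg, ENNReal.rpow_neg]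
    exact ENNReal.inv_le_inv.2 (ENNReal.rpow_le_rpow (ENNReal.ofReal_le_ofReal h) hs0.le)
  have hpairs : ∀ n ∈ Finset.range (N / 2),
      ENNReal.ofReal (2 * (N:ℝ) ^ s * ((n:ℝ) + 1 / 2) ^ (-s)) ≤ f (pa n) + f (pb n) := by
    intro n _
    by_cases h0 : (n:ℝ) + u = 0
    · have hz : ‖(Y : AddCircle (1:ℝ)) - ((((pa n : ℝ)) / (N:ℝ) : ℝ) : AddCircle (1:ℝ))‖ = 0 := by
        have h' := hfa n
        rw [h0, zero_div] at h'
        exact le_antisymm h' (norm_nonneg _)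
      have htop : f (pa n) = ⊤ := by
        rw [hf]; simp only
        rw [hz, ENNReal.ofReal_zero, ENNReal.zero_rpow_of_neg (by linarith)]
      simp [htop]
    · have hnu : (0:ℝ) < (n:ℝ) + u := lt_of_le_of_ne (by positivity) (Ne.symm h0)
      have hd1 : (0:ℝ) < ((n:ℝ) + u) / N := div_pos hnu hNR
      have hd2 : (0:ℝ) < ((n:ℝ) + 1 - u) / N := by
        apply div_pos _ hNR
        have : (0:ℝ) ≤ (n:ℝ) := Nat.cast_nonneg n
        linarith
      have hmid : ((((n:ℝ) + u) / N + ((n:ℝ) + 1 - u) / N) / 2) = ((n:ℝ) + 1/2) / N := by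
        field_simp; ring
      have hNs : (((n:ℝ) + 1/2) / N) ^ (-s) = ((n:ℝ) + 1/2) ^ (-s) * (N:ℝ) ^ s := by
        rw [Real.div_rpow (by positivity) hNR.le, Real.rpow_neg hNR.le, div_eq_mul_inv, inv_inv]
      have hreal : 2 * (N:ℝ) ^ s * ((n:ℝ) + 1/2) ^ (-s)
          ≤ (((n:ℝ) + u) / N) ^ (-s) + (((n:ℝ) + 1 - u) / N) ^ (-s) := by
        have := pair_rpow_ineq hs0 hd1 hd2
        rw [hmid, hNs] at this
        linarith
      calc ENNReal.ofReal (2 * (N:ℝ) ^ s * ((n:ℝ) + 1 / 2) ^ (-s))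
          ≤ ENNReal.ofReal ((((n:ℝ) + u) / N) ^ (-s) + (((n:ℝ) + 1 - u) / N) ^ (-s)) :=
            ENNReal.ofReal_le_ofReal hreal
        _ = ENNReal.ofReal ((((n:ℝ) + u) / N) ^ (-s))
            + ENNReal.ofReal ((((n:ℝ) + 1 - u) / N) ^ (-s)) :=
            ENNReal.ofReal_add (Real.rpow_nonneg hd1.le _) (Real.rpow_nonneg hd2.le _)
        _ = (ENNReal.ofReal (((n:ℝ) + u) / N)) ^ (-s)
            + (ENNReal.ofReal (((n:ℝ) + 1 - u) / N)) ^ (-s) := by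
            rw [ENNReal.ofReal_rpow_of_pos hd1, ENNReal.ofReal_rpow_of_pos hd2]
        _ ≤ f (pa n) + f (pb n) :=
            add_le_add (fmono _ _ (hfa n)) (fmono _ _ (hfb n))
  -- index bookkeeping
  have hmod : ∀ t₁ t₂ : ℤ, (t₁ % (N:ℤ)).toNat = (t₂ % (N:ℤ)).toNat → (N:ℤ) ∣ (t₁ - t₂) := by
    intro t₁ t₂ h
    have e1 := Int.toNat_of_nonneg (Int.emod_nonneg t₁ hNZ.ne')
    have e2 := Int.toNat_of_nonneg (Int.emod_nonneg t₂ hNZ.ne')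
    have h1 : t₁ % (N:ℤ) = t₂ % (N:ℤ) := by omega
    exact Int.ModEq.dvd (Int.ModEq.symm h1)
  have hlt : ∀ t : ℤ, (t % (N:ℤ)).toNat < N := by
    intro t
    have := Int.emod_lt_of_pos t hNZ
    have := Int.emod_nonneg t hNZ.ne'
    omega
  have hinj_a : Set.InjOn pa (Finset.range (N / 2)) := by
    intro n hn m hm h
    simp only [Finset.coe_range, Set.mem_Iio] at hn hm
    have hd := hmod _ _ h
    have hd' : (N:ℤ) ∣ ((m:ℤ) - n) := by
      have e : (K - (n:ℤ)) - (K - (m:ℤ)) = (m:ℤ) - n := by ring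
      rwa [e] at hd
    have hlt' : ((m:ℤ) - n).natAbs < ((N:ℤ)).natAbs := by omega
    have := Int.eq_zero_of_dvd_of_natAbs_lt_natAbs hd' hlt'
    omega
  have hinj_b : Set.InjOn pb (Finset.range (N / 2)) := by
    intro n hn m hm h
    simp only [Finset.coe_range, Set.mem_Iio] at hn hm
    have hd := hmod _ _ h
    have hd' : (N:ℤ) ∣ ((n:ℤ) - m) := by
      have e : (K + (n:ℤ) + 1) - (K + (m:ℤ) + 1) = (n:ℤ) - m := by ring
      rwa [e] at hd
    have hlt' : ((n:ℤ) - m).natAbs < ((N:ℤ)).natAbs := by omega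
    have := Int.eq_zero_of_dvd_of_natAbs_lt_natAbs hd' hlt'
    omega
  have hdisj : Disjoint ((Finset.range (N / 2)).image pa) ((Finset.range (N / 2)).image pb) := by
    rw [Finset.disjoint_left]
    rintro x hx hx'
    obtain ⟨n, hn, rfl⟩ := Finset.mem_image.1 hx
    obtain ⟨m, hm, hmeq⟩ := Finset.mem_image.1 hx'
    have hd := hmod _ _ hmeq
    have heq : (K + (m:ℤ) + 1) - (K - (n:ℤ)) = (m:ℤ) + n + 1 := by ring
    rw [heq] at hd
    have hle := Int.le_of_dvd (by omega) hd
    simp only [Finset.mem_range] at hn hm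
    omega
  have hsubset : ((Finset.range (N / 2)).image pa) ∪ ((Finset.range (N / 2)).image pb)
      ⊆ Finset.range N := by
    intro x hx
    rcases Finset.mem_union.1 hx with h | h <;>
    · obtain ⟨n, _, rfl⟩ := Finset.mem_image.1 h
      exact Finset.mem_range.2 (hlt _)
  calc ENNReal.ofReal (2 * (N : ℝ) ^ s * ∑ n ∈ Finset.range (N / 2), ((n : ℝ) + 1 / 2) ^ (-s))
      = ∑ n ∈ Finset.range (N / 2), ENNReal.ofReal (2 * (N:ℝ) ^ s * ((n:ℝ) + 1 / 2) ^ (-s)) := by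
        rw [Finset.mul_sum, ENNReal.ofReal_sum_of_nonneg (fun n _ => by positivity)]
    _ ≤ ∑ n ∈ Finset.range (N / 2), (f (pa n) + f (pb n)) := Finset.sum_le_sum hpairs
    _ = ∑ n ∈ Finset.range (N / 2), f (pa n) + ∑ n ∈ Finset.range (N / 2), f (pb n) :=
        Finset.sum_add_distrib
    _ = ∑ k ∈ (Finset.range (N / 2)).image pa, f k
        + ∑ k ∈ (Finset.range (N / 2)).image pb, f k := by
        rw [Finset.sum_image (fun n hn m hm h => hinj_a (by simpa using hn) (by simpa using hm) h),
          Finset.sum_image (fun n hn m hm h => hinj_b (by simpa using hn) (by simpa using hm) h)]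
    _ = ∑ k ∈ ((Finset.range (N / 2)).image pa) ∪ ((Finset.range (N / 2)).image pb), f k :=
        (Finset.sum_union hdisj).symm
    _ ≤ ∑ k ∈ Finset.range N, f k := Finset.sum_le_sum_of_subset hsubset
end
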